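/- arXiv:1110.1695 — 3 statements merged into one kernel-verified Lean document; each statement's English description precedes it below -/
import Mathlib

section
/- Let Θ have density proportional to exp(pθ − rκ(θ)) on an open interval (θ₀,θ₁), where κ is twice continuously differentiable. If exp(pθ − rκ(θ)) and κ'(θ)·exp(pθ − rκ(θ)) both tend to 0 as θ → θ₀⁺ and as θ → θ₁⁻, and κ'(Θ) is square-integrable, then E[κ''(Θ)] = r·Var(κ'(Θ)). -/
open MeasureTheory Real Filter Set Topology

/-
Integrating by parts against the density `w θ = C exp(pθ − rκ(θ))`, whose derivative is
`w (p − rκ')`, the vanishing of `κ' w` at both ends gives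
`E[κ''(Θ)] = −E[κ'(Θ)(p − rκ'(Θ))] = r E[κ'(Θ)²] − p E[κ'(Θ)]`,
and `p E[κ'(Θ)] = r E[κ'(Θ)]²` because `E[κ'(Θ)] = p / r`.
-/

theorem integral_Ioo_eq_sub_of_hasDerivAt_of_tendsto {a b A B : ℝ} (hab : a < b)
    {f f' : ℝ → ℝ} (hderiv : ∀ x ∈ Ioo a b, HasDerivAt f (f' x) x)
    (hint : IntegrableOn f' (Ioo a b))
    (ha : Tendsto f (𝓝[>] a) (𝓝 A)) (hb : Tendsto f (𝓝[<] b) (𝓝 B)) :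
    ∫ x in Ioo a b, f' x = B - A := by
  rw [← integral_Ioc_eq_integral_Ioo, ← intervalIntegral.integral_of_le hab.le]
  exact intervalIntegral.integral_eq_sub_of_hasDerivAt_of_tendsto hab hderiv
    ((intervalIntegrable_iff_integrableOn_Ioo_of_le hab.le).2 hint) ha hb

theorem integral_Ioo_deriv_mul_eq_neg_mul_deriv_of_tendsto_zero {a b : ℝ} (hab : a < b)
    {u u' v v' : ℝ → ℝ} (hu : ∀ x ∈ Ioo a b, HasDerivAt u (u' x) x)
    (hv : ∀ x ∈ Ioo a b, HasDerivAt v (v' x) x)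
    (ha : Tendsto (fun x => u x * v x) (𝓝[>] a) (𝓝 0))
    (hb : Tendsto (fun x => u x * v x) (𝓝[<] b) (𝓝 0))
    (hu'v : IntegrableOn (fun x => u' x * v x) (Ioo a b))
    (huv' : IntegrableOn (fun x => u x * v' x) (Ioo a b)) :
    ∫ x in Ioo a b, u' x * v x = -∫ x in Ioo a b, u x * v' x := by
  have hftc := integral_Ioo_eq_sub_of_hasDerivAt_of_tendsto hab
    (fun x hx => (hu x hx).fun_mul (hv x hx)) (hu'v.add huv') ha hb
  rw [integral_add hu'v huv', sub_zero] at hftc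
  linarith

theorem hasDerivAt_const_mul_exp_mul_sub_mul {κ : ℝ → ℝ} {κ'θ θ : ℝ}
    (hκ : HasDerivAt κ κ'θ θ) (C p r : ℝ) :
    HasDerivAt (fun θ => C * exp (p * θ - r * κ θ))
      (C * exp (p * θ - r * κ θ) * (p - r * κ'θ)) θ := by
  have hexponent : HasDerivAt (fun θ => p * θ - r * κ θ) (p - r * κ'θ) θ := by
    simpa only [mul_one] using ((hasDerivAt_id' θ).const_mul p).fun_sub (hκ.const_mul r)
  simpa only [mul_assoc] using hexponent.exp.const_mul C

theorem mul_div_eq_mul_div_sq (p r : ℝ) : p * (p / r) = r * (p / r) ^ 2 := by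
  rcases eq_or_ne r 0 with rfl | hr
  · simp
  · field_simp

theorem expectation_kappa_second_eq_r_var_general
    (θ₀ θ₁ p r C : ℝ) (hθ : θ₀ < θ₁)
    (κ κ' κ'' : ℝ → ℝ)
    (hκ' : ∀ θ ∈ Ioo θ₀ θ₁, HasDerivAt κ (κ' θ) θ)
    (hκ'' : ∀ θ ∈ Ioo θ₀ θ₁, HasDerivAt κ' (κ'' θ) θ)
    (hlim0' : Tendsto (fun θ => κ' θ * exp (p * θ - r * κ θ))
      (nhdsWithin θ₀ (Ioi θ₀)) (nhds 0))
    (hlim1' : Tendsto (fun θ => κ' θ * exp (p * θ - r * κ θ))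
      (nhdsWithin θ₁ (Iio θ₁)) (nhds 0))
    (hint1 : IntegrableOn (fun θ => κ' θ * (C * exp (p * θ - r * κ θ))) (Ioo θ₀ θ₁))
    (hint2 : IntegrableOn (fun θ => (κ' θ) ^ 2 * (C * exp (p * θ - r * κ θ))) (Ioo θ₀ θ₁))
    (hint3 : IntegrableOn (fun θ => κ'' θ * (C * exp (p * θ - r * κ θ))) (Ioo θ₀ θ₁))
    (hmean : ∫ θ in Ioo θ₀ θ₁, κ' θ * (C * exp (p * θ - r * κ θ)) = p / r) :
    ∫ θ in Ioo θ₀ θ₁, κ'' θ * (C * exp (p * θ - r * κ θ)) =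
      r * ((∫ θ in Ioo θ₀ θ₁, (κ' θ) ^ 2 * (C * exp (p * θ - r * κ θ))) -
        (∫ θ in Ioo θ₀ θ₁, κ' θ * (C * exp (p * θ - r * κ θ))) ^ 2) := by
  set w : ℝ → ℝ := fun θ => C * exp (p * θ - r * κ θ)
  have hboundary : ∀ l, Tendsto (fun θ => κ' θ * exp (p * θ - r * κ θ)) l (𝓝 0) →
      Tendsto (fun θ => κ' θ * w θ) l (𝓝 0) := fun l h => by
    simpa only [mul_zero] using (h.const_mul C).congr fun θ => by ring
  have hscore : ∀ θ, κ' θ * (w θ * (p - r * κ' θ)) = p * (κ' θ * w θ) - r * (κ' θ ^ 2 * w θ) :=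
    fun θ => by ring
  have hscore_int : IntegrableOn (fun θ => κ' θ * (w θ * (p - r * κ' θ))) (Ioo θ₀ θ₁) :=
    IntegrableOn.congr_fun ((hint1.const_mul p).sub (hint2.const_mul r))
      (fun θ _ => (hscore θ).symm) measurableSet_Ioo
  have hibp := integral_Ioo_deriv_mul_eq_neg_mul_deriv_of_tendsto_zero (v := w) hθ hκ''
    (fun θ hθ' => hasDerivAt_const_mul_exp_mul_sub_mul (hκ' θ hθ') C p r)
    (hboundary _ hlim0') (hboundary _ hlim1') hint3 hscore_int
  rw [integral_congr_ae (ae_of_all _ hscore), integral_sub (hint1.const_mul p)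
    (hint2.const_mul r), integral_const_mul, integral_const_mul, hmean] at hibp
  rw [hibp, hmean, mul_div_eq_mul_div_sq]
  ring

/-- If Θ has density C·exp(pθ − rκ(θ)) on (θ₀,θ₁) and the boundary terms vanish,
then E[κ''(Θ)] = r·Var(κ'(Θ)). -/
theorem expectation_kappa_second_eq_r_var
    (θ₀ θ₁ p r C : ℝ) (hθ : θ₀ < θ₁) (hr : 0 < r) (hC : 0 < C)
    (κ κ' κ'' : ℝ → ℝ)
    (hκ' : ∀ θ ∈ Ioo θ₀ θ₁, HasDerivAt κ (κ' θ) θ)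
    (hκ'' : ∀ θ ∈ Ioo θ₀ θ₁, HasDerivAt κ' (κ'' θ) θ)
    (hcont : ContinuousOn κ'' (Ioo θ₀ θ₁))
    (hnorm : ∫ θ in Ioo θ₀ θ₁, C * exp (p * θ - r * κ θ) = 1)
    (hlim0 : Tendsto (fun θ => exp (p * θ - r * κ θ)) (nhdsWithin θ₀ (Ioi θ₀)) (nhds 0))
    (hlim1 : Tendsto (fun θ => exp (p * θ - r * κ θ)) (nhdsWithin θ₁ (Iio θ₁)) (nhds 0))
    (hlim0' : Tendsto (fun θ => κ' θ * exp (p * θ - r * κ θ))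
      (nhdsWithin θ₀ (Ioi θ₀)) (nhds 0))
    (hlim1' : Tendsto (fun θ => κ' θ * exp (p * θ - r * κ θ))
      (nhdsWithin θ₁ (Iio θ₁)) (nhds 0))
    (hint1 : IntegrableOn (fun θ => κ' θ * (C * exp (p * θ - r * κ θ))) (Ioo θ₀ θ₁))
    (hint2 : IntegrableOn (fun θ => (κ' θ) ^ 2 * (C * exp (p * θ - r * κ θ))) (Ioo θ₀ θ₁))
    (hint3 : IntegrableOn (fun θ => κ'' θ * (C * exp (p * θ - r * κ θ))) (Ioo θ₀ θ₁))
    (hmean : ∫ θ in Ioo θ₀ θ₁, κ' θ * (C * exp (p * θ - r * κ θ)) = p / r) :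
    ∫ θ in Ioo θ₀ θ₁, κ'' θ * (C * exp (p * θ - r * κ θ)) =
      r * ((∫ θ in Ioo θ₀ θ₁, (κ' θ) ^ 2 * (C * exp (p * θ - r * κ θ))) -
        (∫ θ in Ioo θ₀ θ₁, κ' θ * (C * exp (p * θ - r * κ θ))) ^ 2) :=
  expectation_kappa_second_eq_r_var_general θ₀ θ₁ p r C hθ κ κ' κ'' hκ' hκ'' hlim0' hlim1' hint1
    hint2 hint3 hmean
end

section
/- Let Θ have density C·(cos(θ/2))^{2r}·e^{pθ} on (−π,π), with r > 1/2 and p ∈ ℝ. Then E[tan(Θ/2)] = p/r and Var(tan(Θ/2)) = (p² + r²)/(r²(2r−1)). -/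
open MeasureTheory ProbabilityTheory Real Set

/-!
With `κ(θ) = -2 log cos (θ / 2)` the density is proportional to `w = exp (p θ - r κ(θ))`, so
`w' = (p - r κ') w` and `(κ' w)' = (κ'' + κ' (p - r κ')) w`. For `r > 1/2` both `w` and
`κ' w = sin (θ / 2) cos (θ / 2) ^ (2 r - 1) exp (p θ)` vanish at `±π`, so integrating these
derivatives over `(-π, π)` gives `E[p - r κ'(Θ)] = 0` and `E[κ''(Θ)] + p E[κ'(Θ)] - r E[κ'(Θ) ^ 2] = 0`.
As `κ' = tan (θ / 2)` and `κ'' = (1 + κ' ^ 2) / 2`, these are two linear equations for the first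
two moments of `tan (Θ / 2)`.
-/

lemma cos_half_pos {θ : ℝ} (hθ : θ ∈ Ioo (-π) π) : 0 < cos (θ / 2) :=
  cos_pos_of_mem_Ioo ⟨by linarith [hθ.1], by linarith [hθ.2]⟩

lemma tan_mul_cos_rpow {s : ℝ} (hs : s ≠ 1) (x : ℝ) :
    tan x * cos x ^ s = sin x * cos x ^ (s - 1) := by
  rcases eq_or_ne (cos x) 0 with h | h
  · simp [tan_eq_sin_div_cos, h, zero_rpow (sub_ne_zero.2 hs)]
  · rw [tan_eq_sin_div_cos, rpow_sub_one h]
    ring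

lemma continuous_tan_half_mul_cos_half_rpow {s : ℝ} (hs : 1 < s) :
    Continuous fun θ => tan (θ / 2) * cos (θ / 2) ^ s := by
  simp_rw [tan_mul_cos_rpow hs.ne']
  exact (continuous_sin.comp (continuous_id.div_const 2)).mul
    ((continuous_cos.comp (continuous_id.div_const 2)).rpow_const fun _ => Or.inr (by linarith))

lemma hasDerivAt_cos_half_rpow {θ : ℝ} (hθ : θ ∈ Ioo (-π) π) (s : ℝ) :
    HasDerivAt (fun θ => cos (θ / 2) ^ s) (-(s / 2) * tan (θ / 2) * cos (θ / 2) ^ s) θ := by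
  have hc := cos_half_pos hθ
  convert ((hasDerivAt_id' θ).div_const 2).cos.rpow_const (p := s) (Or.inl hc.ne') using 1
  rw [tan_eq_sin_div_cos, rpow_sub_one hc.ne']
  field_simp

lemma hasDerivAt_tan_half {θ : ℝ} (hθ : θ ∈ Ioo (-π) π) :
    HasDerivAt (fun θ => tan (θ / 2)) ((1 + tan (θ / 2) ^ 2) / 2) θ := by
  have hc := cos_half_pos hθ
  refine ((hasDerivAt_tan hc.ne').comp θ ((hasDerivAt_id' θ).div_const 2)).congr_deriv ?_
  rw [tan_eq_sin_div_cos]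
  field_simp
  linear_combination -sin_sq_add_cos_sq (θ / 2)

lemma hasDerivAt_tan_half_mul_cos_half_rpow {θ : ℝ} (hθ : θ ∈ Ioo (-π) π) (s : ℝ) :
    HasDerivAt (fun θ => tan (θ / 2) * cos (θ / 2) ^ s)
      ((1 / 2 - (s - 1) / 2 * tan (θ / 2) ^ 2) * cos (θ / 2) ^ s) θ := by
  refine ((hasDerivAt_tan_half hθ).mul (hasDerivAt_cos_half_rpow hθ s)).congr_deriv ?_
  ring

lemma setIntegral_Ioo_eq_sub_of_hasDerivAt {f f' : ℝ → ℝ} {a b : ℝ} (hab : a ≤ b)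
    (hcont : ContinuousOn f (Icc a b)) (hderiv : ∀ x ∈ Ioo a b, HasDerivAt f (f' x) x)
    (hint : IntegrableOn f' (Ioo a b)) :
    ∫ x in Ioo a b, f' x = f b - f a := by
  rw [← integral_Ioc_eq_integral_Ioo, ← intervalIntegral.integral_of_le hab]
  exact intervalIntegral.integral_eq_sub_of_hasDerivAt_of_le hab hcont hderiv
    ((intervalIntegrable_iff_integrableOn_Ioo_of_le hab).2 hint)

lemma integrableOn_tan_half_sq_mul_cos_half_rpow {s : ℝ} (hs : 1 < s) :
    IntegrableOn (fun θ => tan (θ / 2) ^ 2 * cos (θ / 2) ^ s) (Ioo (-π) π) := by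
  have hcos : Continuous fun θ => cos (θ / 2) ^ s :=
    (continuous_cos.comp (continuous_id.div_const 2)).rpow_const fun _ => Or.inr (by linarith)
  -- `θ / 2 - tan (θ / 2) * cos (θ / 2) ^ s` is nondecreasing, so its derivative is integrable.
  set g' : ℝ → ℝ := fun θ =>
    (1 - cos (θ / 2) ^ s) / 2 + (s - 1) / 2 * (tan (θ / 2) ^ 2 * cos (θ / 2) ^ s)
  have hg' : IntegrableOn g' (Ioo (-π) π) := by
    refine (intervalIntegral.integrableOn_deriv_of_nonneg
      (g := fun θ => θ / 2 - tan (θ / 2) * cos (θ / 2) ^ s) ?_ (fun θ hθ => ?_)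
      (fun θ hθ => ?_)).mono_set Ioo_subset_Ioc_self
    · exact ((continuous_id.div_const 2).sub
        (continuous_tan_half_mul_cos_half_rpow hs)).continuousOn
    · refine (((hasDerivAt_id' θ).div_const 2).sub
        (hasDerivAt_tan_half_mul_cos_half_rpow hθ s)).congr_deriv ?_
      ring
    · have hc := cos_half_pos hθ
      have : cos (θ / 2) ^ s ≤ 1 := rpow_le_one hc.le (cos_le_one _) (by linarith)
      have : 0 ≤ cos (θ / 2) ^ s := rpow_nonneg hc.le s
      positivity
  have hbdd : IntegrableOn (fun θ => (1 - cos (θ / 2) ^ s) / 2) (Ioo (-π) π) :=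
    ((continuous_const.sub hcos).div_const 2).integrableOn_Icc.mono_set Ioo_subset_Icc_self
  refine IntegrableOn.congr_fun ((hg'.sub hbdd).const_mul (2 / (s - 1))) (fun θ _ => ?_)
    measurableSet_Ioo
  have : s - 1 ≠ 0 := by linarith
  simp only [g', Pi.sub_apply]
  field_simp
  ring

noncomputable def hypSecWeight (p r θ : ℝ) : ℝ := cos (θ / 2) ^ (2 * r) * exp (p * θ)

section HypSecWeight

variable {p r : ℝ}

lemma continuous_hypSecWeight (hr : 0 ≤ r) : Continuous (hypSecWeight p r) :=
  ((continuous_cos.comp (continuous_id.div_const 2)).rpow_const fun _ => Or.inr (by linarith)).mul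
    (continuous_exp.comp (continuous_const.mul continuous_id))

lemma hypSecWeight_pi (hr : 0 < r) : hypSecWeight p r π = 0 := by
  simp [hypSecWeight, zero_rpow (by positivity : 2 * r ≠ 0)]

lemma hypSecWeight_neg_pi (hr : 0 < r) : hypSecWeight p r (-π) = 0 := by
  simp [hypSecWeight, neg_div, zero_rpow (by positivity : 2 * r ≠ 0)]

lemma hasDerivAt_hypSecWeight {θ : ℝ} (hθ : θ ∈ Ioo (-π) π) :
    HasDerivAt (hypSecWeight p r) ((p - r * tan (θ / 2)) * hypSecWeight p r θ) θ := by
  have hexp : HasDerivAt (fun θ => exp (p * θ)) (exp (p * θ) * p) θ := by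
    simpa using ((hasDerivAt_id θ).const_mul p).exp
  refine ((hasDerivAt_cos_half_rpow hθ (2 * r)).mul hexp).congr_deriv ?_
  simp only [hypSecWeight]
  ring

lemma hasDerivAt_tan_half_mul_hypSecWeight {θ : ℝ} (hθ : θ ∈ Ioo (-π) π) :
    HasDerivAt (fun θ => tan (θ / 2) * hypSecWeight p r θ)
      ((1 / 2 + p * tan (θ / 2) - (r - 1 / 2) * tan (θ / 2) ^ 2) * hypSecWeight p r θ) θ := by
  refine ((hasDerivAt_tan_half hθ).mul (hasDerivAt_hypSecWeight hθ)).congr_deriv ?_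
  ring

lemma continuous_tan_half_mul_hypSecWeight (hr : 1 / 2 < r) :
    Continuous fun θ => tan (θ / 2) * hypSecWeight p r θ := by
  simp_rw [hypSecWeight, ← mul_assoc]
  exact (continuous_tan_half_mul_cos_half_rpow (by linarith)).mul
    (continuous_exp.comp (continuous_const.mul continuous_id))

lemma integrableOn_hypSecWeight (hr : 0 ≤ r) :
    IntegrableOn (hypSecWeight p r) (Ioo (-π) π) :=
  (continuous_hypSecWeight hr).integrableOn_Icc.mono_set Ioo_subset_Icc_self

lemma integrableOn_tan_half_mul_hypSecWeight (hr : 1 / 2 < r) :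
    IntegrableOn (fun θ => tan (θ / 2) * hypSecWeight p r θ) (Ioo (-π) π) :=
  (continuous_tan_half_mul_hypSecWeight hr).integrableOn_Icc.mono_set Ioo_subset_Icc_self

lemma integrableOn_tan_half_sq_mul_hypSecWeight (hr : 1 / 2 < r) :
    IntegrableOn (fun θ => tan (θ / 2) ^ 2 * hypSecWeight p r θ) (Ioo (-π) π) := by
  simp_rw [hypSecWeight, ← mul_assoc]
  exact (integrableOn_tan_half_sq_mul_cos_half_rpow (by linarith)).mul_continuousOn_of_subset
    (continuous_exp.comp (continuous_const.mul continuous_id)).continuousOn measurableSet_Ioo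
    isCompact_Icc Ioo_subset_Icc_self

lemma integral_tan_half_mul_hypSecWeight (hr : 1 / 2 < r) :
    r * ∫ θ in Ioo (-π) π, tan (θ / 2) * hypSecWeight p r θ =
      p * ∫ θ in Ioo (-π) π, hypSecWeight p r θ := by
  have hw := (integrableOn_hypSecWeight (p := p) (r := r) (by linarith)).const_mul p
  have htw := (integrableOn_tan_half_mul_hypSecWeight (p := p) hr).const_mul r
  have hftc := setIntegral_Ioo_eq_sub_of_hasDerivAt (f := hypSecWeight p r)
    (f' := fun θ => p * hypSecWeight p r θ - r * (tan (θ / 2) * hypSecWeight p r θ))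
    (neg_le_self pi_pos.le) (continuous_hypSecWeight (by linarith)).continuousOn
    (fun θ hθ => (hasDerivAt_hypSecWeight hθ).congr_deriv (by ring)) (hw.sub htw)
  rw [integral_sub hw htw, integral_const_mul, integral_const_mul,
    hypSecWeight_pi (by linarith), hypSecWeight_neg_pi (by linarith)] at hftc
  linarith

lemma integral_tan_half_sq_mul_hypSecWeight (hr : 1 / 2 < r) :
    (2 * r - 1) * ∫ θ in Ioo (-π) π, tan (θ / 2) ^ 2 * hypSecWeight p r θ =
      (∫ θ in Ioo (-π) π, hypSecWeight p r θ) +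
        2 * p * ∫ θ in Ioo (-π) π, tan (θ / 2) * hypSecWeight p r θ := by
  have hw := (integrableOn_hypSecWeight (p := p) (r := r) (by linarith)).const_mul (1 / 2)
  have htw := (integrableOn_tan_half_mul_hypSecWeight (p := p) hr).const_mul p
  have ht2w := (integrableOn_tan_half_sq_mul_hypSecWeight (p := p) hr).const_mul (r - 1 / 2)
  have hftc := setIntegral_Ioo_eq_sub_of_hasDerivAt
    (f := fun θ => tan (θ / 2) * hypSecWeight p r θ)
    (f' := fun θ => 1 / 2 * hypSecWeight p r θ + (p * (tan (θ / 2) * hypSecWeight p r θ)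
      - (r - 1 / 2) * (tan (θ / 2) ^ 2 * hypSecWeight p r θ)))
    (neg_le_self pi_pos.le) (continuous_tan_half_mul_hypSecWeight hr).continuousOn
    (fun θ hθ => (hasDerivAt_tan_half_mul_hypSecWeight hθ).congr_deriv (by ring))
    (hw.fun_add (htw.sub' ht2w))
  rw [integral_add hw (htw.sub' ht2w), integral_sub htw ht2w, integral_const_mul,
    integral_const_mul, integral_const_mul, hypSecWeight_pi (by linarith),
    hypSecWeight_neg_pi (by linarith), mul_zero, mul_zero] at hftc
  linarith

end HypSecWeight

lemma toReal_ofReal_indicator_smul {α : Type*} {s : Set α} {f : α → ℝ}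
    (hf : ∀ x ∈ s, 0 ≤ f x) (g : α → ℝ) :
    (fun x => (ENNReal.ofReal (s.indicator f x)).toReal • g x) =
      s.indicator fun x => f x * g x := by
  ext x
  rw [ENNReal.toReal_ofReal (indicator_nonneg hf x), smul_eq_mul, indicator_mul_left]

section DensityOnSet

variable {Ω α : Type*} [MeasurableSpace Ω] [MeasurableSpace α] {μ : Measure Ω} {ν : Measure α}
  {X : Ω → α} {s : Set α} {f : α → ℝ}

lemma integral_comp_eq_setIntegral_mul_of_map_eq_withDensity (hX : Measurable X)
    (hs : MeasurableSet s) (hfm : Measurable f) (hf : ∀ x ∈ s, 0 ≤ f x)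
    (hlaw : μ.map X = ν.withDensity fun x => ENNReal.ofReal (s.indicator f x))
    {g : α → ℝ} (hg : Measurable g) :
    ∫ ω, g (X ω) ∂μ = ∫ x in s, f x * g x ∂ν := by
  rw [← integral_map hX.aemeasurable hg.aestronglyMeasurable, hlaw,
    integral_withDensity_eq_integral_toReal_smul (hfm.indicator hs).ennreal_ofReal
      (ae_of_all _ fun _ => ENNReal.ofReal_lt_top),
    toReal_ofReal_indicator_smul hf, integral_indicator hs]

lemma integrable_comp_of_map_eq_withDensity (hX : Measurable X)
    (hs : MeasurableSet s) (hfm : Measurable f) (hf : ∀ x ∈ s, 0 ≤ f x)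
    (hlaw : μ.map X = ν.withDensity fun x => ENNReal.ofReal (s.indicator f x))
    {g : α → ℝ} (hg : Measurable g) (hfg : IntegrableOn (fun x => f x * g x) s ν) :
    Integrable (fun ω => g (X ω)) μ := by
  refine (integrable_map_measure hg.aestronglyMeasurable hX.aemeasurable).1 ?_
  rwa [hlaw, integrable_withDensity_iff_integrable_smul' (hfm.indicator hs).ennreal_ofReal
      (ae_of_all _ fun _ => ENNReal.ofReal_lt_top),
    toReal_ofReal_indicator_smul hf, integrable_indicator_iff hs]

end DensityOnSet

/-- If Θ has density C(cos(θ/2))^{2r} e^{pθ} on (−π,π), with r > 1/2 and p ∈ ℝ,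
then E[tan(Θ/2)] = p/r and Var(tan(Θ/2)) = (p²+r²)/(r²(2r−1)). -/
theorem hyperbolicSecant_randomization_moments
    {Ω : Type*} [MeasureSpace Ω] [IsProbabilityMeasure (ℙ : Measure Ω)]
    (p r C : ℝ) (hr : 1 / 2 < r) (hC : 0 < C)
    (Θ : Ω → ℝ) (hΘ : Measurable Θ)
    (hlaw : Measure.map Θ ℙ = volume.withDensity fun θ =>
      ENNReal.ofReal (Set.indicator (Set.Ioo (-Real.pi) Real.pi)
        (fun θ => C * Real.cos (θ / 2) ^ (2 * r) * exp (p * θ)) θ)) :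
    (∫ ω, Real.tan (Θ ω / 2) ∂ℙ) = p / r ∧
      variance (fun ω => Real.tan (Θ ω / 2)) ℙ = (p ^ 2 + r ^ 2) / (r ^ 2 * (2 * r - 1)) := by
  have hf_nonneg : ∀ θ ∈ Ioo (-π) π, 0 ≤ C * cos (θ / 2) ^ (2 * r) * exp (p * θ) :=
    fun θ hθ => by have := cos_half_pos hθ; positivity
  have hf_meas : Measurable fun θ => C * cos (θ / 2) ^ (2 * r) * exp (p * θ) := by fun_prop
  have hf_mul : ∀ g : ℝ → ℝ, (fun θ => C * cos (θ / 2) ^ (2 * r) * exp (p * θ) * g θ) =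
      fun θ => C * (g θ * hypSecWeight p r θ) := fun g => by ext; simp only [hypSecWeight]; ring
  have htan : Measurable fun θ => tan (θ / 2) := by simp_rw [tan_eq_sin_div_cos]; fun_prop
  have hmoment : ∀ g : ℝ → ℝ, Measurable g →
      ∫ ω, g (Θ ω) ∂ℙ = C * ∫ θ in Ioo (-π) π, g θ * hypSecWeight p r θ := fun g hg => by
    rw [integral_comp_eq_setIntegral_mul_of_map_eq_withDensity hΘ measurableSet_Ioo hf_meas
      hf_nonneg hlaw hg, hf_mul, integral_const_mul]
  have hnorm : C * ∫ θ in Ioo (-π) π, hypSecWeight p r θ = 1 := by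
    simpa using (hmoment (fun _ => 1) measurable_const).symm
  have hI1 := integral_tan_half_mul_hypSecWeight (p := p) hr
  have hI2 := integral_tan_half_sq_mul_hypSecWeight (p := p) hr
  have hr0 : r ≠ 0 := by linarith
  have h2r : 2 * r - 1 ≠ 0 := by linarith
  have hmean : ∫ ω, tan (Θ ω / 2) ∂ℙ = p / r := by
    rw [hmoment _ htan, eq_div_iff hr0]
    linear_combination C * hI1 + p * hnorm
  have hsq : ∫ ω, tan (Θ ω / 2) ^ 2 ∂ℙ = (r + 2 * p ^ 2) / (r * (2 * r - 1)) := by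
    rw [hmoment _ (htan.pow_const 2), eq_div_iff (mul_ne_zero hr0 h2r)]
    linear_combination r * C * hI2 + 2 * p * C * hI1 + (r + 2 * p ^ 2) * hnorm
  have hL2 : MemLp (fun ω => tan (Θ ω / 2)) 2 ℙ := by
    refine (memLp_two_iff_integrable_sq (htan.comp hΘ).aestronglyMeasurable).2
      (integrable_comp_of_map_eq_withDensity hΘ measurableSet_Ioo hf_meas hf_nonneg hlaw
        (htan.pow_const 2) ?_)
    rw [hf_mul]
    exact (integrableOn_tan_half_sq_mul_hypSecWeight hr).const_mul C
  refine ⟨hmean, ?_⟩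
  rw [variance_eq_sub hL2, Pi.pow_def, hsq, hmean, div_pow,
    div_sub_div _ _ (mul_ne_zero hr0 h2r) (pow_ne_zero 2 hr0),
    div_eq_div_iff (by positivity) (by positivity)]
  ring
end

section
/- Let K(x,y) for s < t be given by K = 1 + αΔ̃ + βΔ + σΔ̃² + τΔ² − (1−γ)Δ̃Δ evaluated at Δ = Δ_{s,t}, Δ̃ = Δ̃_{s,t} (harness differences of a process Z). Suppose Z is a harness with E[Δ_{s,1}|Z_s,Z_u] = Δ_{s,u}, E[Δ̃_{s,1}|Z_s,Z_u] = Δ̃_{s,u}, and Var(Z_1|Z_s,Z_u) = c_{s,u}·K(Z_s,Z_u) for some constant c_{s,u} ≥ 0, for s < 1 < u. Then E[K(Z_s,Z_1)|Z_s,Z_u] = (1 + c_{s,u}·(τ + σs² + (1−γ)s)/(1−s)²)·K(Z_s,Z_u). -/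
/-!
As a function of `Z₁`, `K(Z_s, Z₁)` is a quadratic polynomial whose coefficients depend only on
`Z_s` and whose leading coefficient is `(τ + σs² + (1-γ)s)/(1-s)²`. Taking `E[·|Z_s,Z_u]` replaces
`Z₁` by the harness mean `m`, the point at time `1` of the chord through `(s, Z_s)` and `(u, Z_u)`,
and `Z₁²` by `m² + Var(Z₁|Z_s,Z_u)`. Since `m` lies on that chord, the quadratic evaluated at `m`
is `K(Z_s, Z_u)`, and the variance term contributes the leading coefficient times `c·K(Z_s, Z_u)`.
-/

open MeasureTheory

/-- `K(x, z)` for the values `x = Z_s`, `z = Z_t`: here `Δ̃` and `Δ` are the intercept at time `0`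
and the slope of the chord through `(s, x)` and `(t, z)`. -/
noncomputable def harnessKernel (α β σ τ γ s t x z : ℝ) : ℝ :=
  1 + α * ((t * x - s * z) / (t - s)) + β * ((z - x) / (t - s)) +
    σ * ((t * x - s * z) / (t - s)) ^ 2 + τ * ((z - x) / (t - s)) ^ 2 -
    (1 - γ) * ((t * x - s * z) / (t - s)) * ((z - x) / (t - s))

section
variable (α β σ τ γ : ℝ) {s t : ℝ}

theorem harnessKernel_eq_quadratic (hst : t - s ≠ 0) (x z : ℝ) :
    harnessKernel α β σ τ γ s t x z =
      (1 + (α * t - β) / (t - s) * x + (σ * t ^ 2 + τ + (1 - γ) * t) / (t - s) ^ 2 * x ^ 2) +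
      ((β - α * s) / (t - s) - (2 * σ * s * t + 2 * τ + (1 - γ) * (s + t)) / (t - s) ^ 2 * x) * z +
      (σ * s ^ 2 + τ + (1 - γ) * s) / (t - s) ^ 2 * z ^ 2 := by
  unfold harnessKernel
  field_simp
  ring

theorem harnessKernel_chord {u : ℝ} (hst : t - s ≠ 0) (hsu : u - s ≠ 0) (x y : ℝ) :
    harnessKernel α β σ τ γ s t x (((u - t) * x + (t - s) * y) / (u - s)) =
      harnessKernel α β σ τ γ s u x y := by
  have hslope : (((u - t) * x + (t - s) * y) / (u - s) - x) / (t - s) = (y - x) / (u - s) := by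
    field_simp; ring
  have hintercept : (t * x - s * (((u - t) * x + (t - s) * y) / (u - s))) / (t - s) =
      (u * x - s * y) / (u - s) := by
    field_simp; ring
  simp only [harnessKernel, hslope, hintercept]

end

theorem condExp_add_mul_add_const_mul_sq {Ω : Type*} {m m0 : MeasurableSpace Ω}
    {μ : Measure Ω} [IsFiniteMeasure μ] (hm : m ≤ m0) {a b f : Ω → ℝ} (C : ℝ)
    (ha : StronglyMeasurable[m] a) (hb : StronglyMeasurable[m] b) (ha_int : Integrable a μ)
    (hb_L2 : MemLp b 2 μ) (hf_L2 : MemLp f 2 μ) :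
    μ[fun ω => a ω + b ω * f ω + C * f ω ^ 2 | m] =ᵐ[μ]
      fun ω => a ω + b ω * μ[f | m] ω + C * μ[fun ω => f ω ^ 2 | m] ω := by
  have hbf : Integrable (b * f) μ := hb_L2.integrable_mul hf_L2
  have hf2 : Integrable (fun ω => f ω ^ 2) μ := hf_L2.integrable_sq
  have hsum : μ[a + b * f + C • fun ω => f ω ^ 2 | m] =ᵐ[μ]
      μ[a | m] + μ[b * f | m] + C • μ[fun ω => f ω ^ 2 | m] :=
    (condExp_add (ha_int.add hbf) (hf2.smul C) m).trans <|
      ((condExp_add ha_int hbf m).add (condExp_smul C _ m))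
  rw [condExp_of_stronglyMeasurable hm ha ha_int] at hsum
  change μ[a + b * f + C • fun ω => f ω ^ 2 | m] =ᵐ[μ] _
  filter_upwards [hsum, condExp_mul_of_stronglyMeasurable_left hb hbf
    (hf_L2.integrable one_le_two)] with ω hω hbω
  simpa [hbω] using hω

theorem conditional_expectation_of_K_general
    {Ω : Type*} [m0 : MeasurableSpace Ω] (μ : Measure Ω) [IsProbabilityMeasure μ]
    (α β σ τ γ : ℝ)
    (Z : ℝ → Ω → ℝ) (hmeas : ∀ t, Measurable (Z t))
    (hL2 : ∀ t, MemLp (Z t) 2 μ)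
    (K : ℝ → ℝ → Ω → ℝ)
    (hK : ∀ s t : ℝ, ∀ ω : Ω, K s t ω =
      1 + α * ((t * Z s ω - s * Z t ω) / (t - s)) +
        β * ((Z t ω - Z s ω) / (t - s)) +
        σ * ((t * Z s ω - s * Z t ω) / (t - s)) ^ 2 +
        τ * ((Z t ω - Z s ω) / (t - s)) ^ 2 -
        (1 - γ) * ((t * Z s ω - s * Z t ω) / (t - s)) * ((Z t ω - Z s ω) / (t - s)))
    (s u : ℝ) (hs : s < 1) (hu : 1 < u)
    (c : ℝ)
    -- harness property at t = 1
    (hharness :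
      μ[Z 1 | MeasurableSpace.comap (Z s) inferInstance ⊔
          MeasurableSpace.comap (Z u) inferInstance] =ᵐ[μ]
        fun ω => ((u - 1) * Z s ω + (1 - s) * Z u ω) / (u - s))
    -- conditional variance of Z₁ given Z_s, Z_u is proportional to K(Z_s, Z_u)
    (hvar :
      (μ[fun ω => (Z 1 ω) ^ 2 | MeasurableSpace.comap (Z s) inferInstance ⊔
          MeasurableSpace.comap (Z u) inferInstance] -
        fun ω => ((μ[Z 1 | MeasurableSpace.comap (Z s) inferInstance ⊔
          MeasurableSpace.comap (Z u) inferInstance]) ω) ^ 2) =ᵐ[μ]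
        fun ω => c * K s u ω) :
    μ[K s 1 | MeasurableSpace.comap (Z s) inferInstance ⊔
        MeasurableSpace.comap (Z u) inferInstance] =ᵐ[μ]
      fun ω => (1 + c * (τ + σ * s ^ 2 + (1 - γ) * s) / (1 - s) ^ 2) * K s u ω := by
  set G := MeasurableSpace.comap (Z s) inferInstance ⊔ MeasurableSpace.comap (Z u) inferInstance
  have h1s : 1 - s ≠ 0 := sub_ne_zero.mpr hs.ne'
  have hus : u - s ≠ 0 := sub_ne_zero.mpr (hs.trans hu).ne'
  have hG : G ≤ m0 := sup_le (hmeas s).comap_le (hmeas u).comap_le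
  have hZs : Measurable[G] (Z s) := (comap_measurable (Z s)).mono le_sup_left le_rfl
  have hsecond : μ[fun ω => Z 1 ω ^ 2 | G] =ᵐ[μ]
      fun ω => c * K s u ω + (((u - 1) * Z s ω + (1 - s) * Z u ω) / (u - s)) ^ 2 := by
    filter_upwards [hvar, hharness] with ω hvarω hmeanω
    rw [← hmeanω, ← hvarω, Pi.sub_apply, sub_add_cancel]
  have hK1 : K s 1 = fun ω => _ := funext fun ω =>
    (hK s 1 ω).trans (harnessKernel_eq_quadratic α β σ τ γ h1s (Z s ω) (Z 1 ω))
  rw [hK1]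
  refine (condExp_add_mul_add_const_mul_sq hG _ ?_ ?_ ?_ ?_ (hL2 1)).trans ?_
  · exact (by fun_prop : Measurable[G] _).stronglyMeasurable
  · exact (by fun_prop : Measurable[G] _).stronglyMeasurable
  · exact ((integrable_const 1).add (((hL2 s).integrable one_le_two).const_mul _)).add
      ((hL2 s).integrable_sq.const_mul _)
  · exact (memLp_const _).sub ((hL2 s).const_mul _)
  filter_upwards [hharness, hsecond] with ω hmeanω hsecondω
  have hchord := (harnessKernel_chord α β σ τ γ h1s hus (Z s ω) (Z u ω)).trans (hK s u ω).symm
  rw [harnessKernel_eq_quadratic α β σ τ γ h1s] at hchord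
  rw [hmeanω, hsecondω]
  linear_combination hchord

/-- Stitching lemma computation: if Z is a harness on s < 1 < u with
Var(Z₁|Z_s,Z_u) = c_{s,u}·K(Z_s,Z_u), where
K = 1 + αΔ̃ + βΔ + σΔ̃² + τΔ² − (1−γ)Δ̃Δ, then
E[K(Z_s,Z₁)|Z_s,Z_u] = (1 + c_{s,u}(τ + σs² + (1−γ)s)/(1−s)²)·K(Z_s,Z_u). -/
theorem conditional_expectation_of_K
    {Ω : Type*} [m0 : MeasurableSpace Ω] (μ : Measure Ω) [IsProbabilityMeasure μ]
    (α β σ τ γ : ℝ)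
    (Z : ℝ → Ω → ℝ) (hmeas : ∀ t, Measurable (Z t))
    (hL2 : ∀ t, MemLp (Z t) 2 μ)
    (K : ℝ → ℝ → Ω → ℝ)
    (hK : ∀ s t : ℝ, ∀ ω : Ω, K s t ω =
      1 + α * ((t * Z s ω - s * Z t ω) / (t - s)) +
        β * ((Z t ω - Z s ω) / (t - s)) +
        σ * ((t * Z s ω - s * Z t ω) / (t - s)) ^ 2 +
        τ * ((Z t ω - Z s ω) / (t - s)) ^ 2 -
        (1 - γ) * ((t * Z s ω - s * Z t ω) / (t - s)) * ((Z t ω - Z s ω) / (t - s)))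
    (s u : ℝ) (hs : s < 1) (hu : 1 < u)
    (c : ℝ) (hc : 0 ≤ c)
    -- harness property at t = 1
    (hharness :
      μ[Z 1 | MeasurableSpace.comap (Z s) inferInstance ⊔
          MeasurableSpace.comap (Z u) inferInstance] =ᵐ[μ]
        fun ω => ((u - 1) * Z s ω + (1 - s) * Z u ω) / (u - s))
    (hΔ : μ[fun ω => (Z 1 ω - Z s ω) / (1 - s) |
        MeasurableSpace.comap (Z s) inferInstance ⊔
          MeasurableSpace.comap (Z u) inferInstance] =ᵐ[μ]
      fun ω => (Z u ω - Z s ω) / (u - s))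
    (hΔt : μ[fun ω => (1 * Z s ω - s * Z 1 ω) / (1 - s) |
        MeasurableSpace.comap (Z s) inferInstance ⊔
          MeasurableSpace.comap (Z u) inferInstance] =ᵐ[μ]
      fun ω => (u * Z s ω - s * Z u ω) / (u - s))
    -- conditional variance of Z₁ given Z_s, Z_u is proportional to K(Z_s, Z_u)
    (hvar :
      (μ[fun ω => (Z 1 ω) ^ 2 | MeasurableSpace.comap (Z s) inferInstance ⊔
          MeasurableSpace.comap (Z u) inferInstance] -
        fun ω => ((μ[Z 1 | MeasurableSpace.comap (Z s) inferInstance ⊔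
          MeasurableSpace.comap (Z u) inferInstance]) ω) ^ 2) =ᵐ[μ]
        fun ω => c * K s u ω) :
    μ[K s 1 | MeasurableSpace.comap (Z s) inferInstance ⊔
        MeasurableSpace.comap (Z u) inferInstance] =ᵐ[μ]
      fun ω => (1 + c * (τ + σ * s ^ 2 + (1 - γ) * s) / (1 - s) ^ 2) * K s u ω :=
  conditional_expectation_of_K_general (m0 := m0) μ α β σ τ γ Z hmeas hL2 K hK s u hs hu c hharness
    hvar
end
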